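/- Let M be a matroid on a finite ground set E. The map sending a modular ideal I of M to I ∩ 𝒞(M) is a bijection from the set of modular ideals of M onto the set of linear classes of circuits of M; moreover, for modular ideals I₁ and I₂ we have I₁ ⊆ I₂ if and only if I₁ ∩ 𝒞(M) ⊆ I₂ ∩ 𝒞(M). (The lattice of modular ideals of M is isomorphic to the lattice of linear classes of circuits of M.) -/

import Mathlib

/-!
A modular ideal is determined by its circuits: to rebuild a set `S` from a basis `J`, add the
elements `x ∈ S \ J` one at a time; `J ∪ D` and the fundamental circuit of `x` form a modular
pair. This makes `I ↦ I ∩ 𝒞(M)` injective and order-reflecting.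

For surjectivity, a linear class `L` is the image of the family of sets all of whose circuits lie
in `L`, and the point is that this family is closed under unions of modular pairs `(A, B)`. This
goes by induction on `|A ∪ B|`, over all matroids at once. A circuit `Z ⊆ A ∪ B` is handled by
deleting an element outside `Z` that keeps the pair modular, or by contracting a non-loop
`e ∈ A ∩ B` (the linear class descends to `M ／ {e}`). What remains is the case where some
`e ∈ A ∩ B \ Z` is spanned by a proper part of `Z`; then `insert e Z` has nullity two and `Z` is
covered by a modular pair of two other circuits inside it.
-/

open Set

/-- The rank of a set `S` in a matroid `M`: the largest cardinality of an independent
subset of `S`. -/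
noncomputable def Matroid.rk' {α : Type*} (M : Matroid α) (S : Set α) : ℕ :=
  sSup (Set.ncard '' {I : Set α | M.Indep I ∧ I ⊆ S})

/-- A circuit of `M`: a minimal dependent set, i.e. a dependent set all of whose proper
subsets are independent. -/
def Matroid.IsCircuit' {α : Type*} (M : Matroid α) (C : Set α) : Prop :=
  M.Dep C ∧ ∀ D : Set α, D ⊂ C → M.Indep D

/-- `S` and `T` form a modular pair in `M`: `rk(S ∩ T) + rk(S ∪ T) = rk S + rk T`. -/
def Matroid.ModularPairSets {α : Type*} (M : Matroid α) (S T : Set α) : Prop :=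
  M.rk' (S ∩ T) + M.rk' (S ∪ T) = M.rk' S + M.rk' T

/-- A modular ideal of `M`: a nonempty downward-closed family of subsets containing `{e}`
for every non-loop `e` and closed under unions of modular pairs. -/
def Matroid.ModularIdeal {α : Type*} (M : Matroid α) (I : Set (Set α)) : Prop :=
  I.Nonempty ∧ (∀ A B : Set α, A ⊆ B → B ∈ I → A ∈ I) ∧
    (∀ e : α, M.Indep {e} → {e} ∈ I) ∧
    (∀ A B : Set α, A ∈ I → B ∈ I → M.ModularPairSets A B → A ∪ B ∈ I)

/-- A linear class of circuits of `M`: a set `L` of circuits such that whenever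
`X, Y ∈ L` form a modular pair, every circuit `Z ⊆ X ∪ Y` belongs to `L`. -/
def Matroid.LinearClass {α : Type*} (M : Matroid α) (L : Set (Set α)) : Prop :=
  (∀ C ∈ L, M.IsCircuit' C) ∧
    ∀ X ∈ L, ∀ Y ∈ L, M.ModularPairSets X Y →
      ∀ Z : Set α, M.IsCircuit' Z → Z ⊆ X ∪ Y → Z ∈ L

namespace Matroid

variable {α : Type*} {M : Matroid α} {A B C D S T X Y Z J : Set α} {L : Set (Set α)} {e x : α}

lemma isCircuit'_iff : M.IsCircuit' C ↔ M.IsCircuit C :=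
  isCircuit_iff_forall_ssubset.symm

lemma linearClass_iff : M.LinearClass L ↔ (∀ C ∈ L, M.IsCircuit C) ∧
    ∀ X ∈ L, ∀ Y ∈ L, M.ModularPairSets X Y → ∀ Z, M.IsCircuit Z → Z ⊆ X ∪ Y → Z ∈ L := by
  simp only [LinearClass, isCircuit'_iff]

lemma LinearClass.isCircuit (hL : M.LinearClass L) (hC : C ∈ L) : M.IsCircuit C :=
  (linearClass_iff.1 hL).1 C hC

lemma LinearClass.mem_of_subset_union (hL : M.LinearClass L) (hX : X ∈ L) (hY : Y ∈ L)
    (hXY : M.ModularPairSets X Y) (hZ : M.IsCircuit Z) (hZXY : Z ⊆ X ∪ Y) : Z ∈ L :=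
  (linearClass_iff.1 hL).2 X hX Y hY hXY Z hZ hZXY

section Rank

variable [Finite α]

lemma IsBasis'.rk'_eq (hJ : M.IsBasis' J X) : M.rk' X = J.ncard := by
  refine IsGreatest.csSup_eq ⟨⟨J, ⟨hJ.indep, hJ.subset⟩, rfl⟩, ?_⟩
  rintro _ ⟨I, ⟨hI, hIX⟩, rfl⟩
  have := hI.encard_le_eRk_of_subset hIX
  rwa [← hJ.encard_eq_eRk, ← (toFinite I).cast_ncard_eq, ← (toFinite J).cast_ncard_eq,
    Nat.cast_le] at this

lemma cast_rk' (M : Matroid α) (X : Set α) : (M.rk' X : ℕ∞) = M.eRk X := by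
  obtain ⟨J, hJ⟩ := M.exists_isBasis' X
  rw [hJ.rk'_eq, (toFinite J).cast_ncard_eq, hJ.encard_eq_eRk]

lemma Indep.rk'_eq (hJ : M.Indep J) : M.rk' J = J.ncard :=
  hJ.isBasis_self.isBasis'.rk'_eq

lemma rk'_empty (M : Matroid α) : M.rk' ∅ = 0 := by
  simpa using M.empty_indep.rk'_eq

lemma rk'_mono (M : Matroid α) (hXY : X ⊆ Y) : M.rk' X ≤ M.rk' Y := by
  simpa only [← cast_rk', Nat.cast_le] using M.eRk_mono hXY

lemma rk'_le_ncard (M : Matroid α) (X : Set α) : M.rk' X ≤ X.ncard := by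
  simpa only [← cast_rk', ← (toFinite X).cast_ncard_eq, Nat.cast_le] using M.eRk_le_encard X

lemma rk'_inter_add_rk'_union_le (M : Matroid α) (X Y : Set α) :
    M.rk' (X ∩ Y) + M.rk' (X ∪ Y) ≤ M.rk' X + M.rk' Y := by
  have := M.eRk_inter_add_eRk_union_le X Y
  simp only [← cast_rk'] at this
  exact_mod_cast this

lemma rk'_insert_le_add_one (M : Matroid α) (e : α) (X : Set α) :
    M.rk' (insert e X) ≤ M.rk' X + 1 := by
  have := M.eRk_insert_le_add_one e X
  simp only [← cast_rk'] at this
  exact_mod_cast this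

lemma indep_of_ncard_le_rk' (hX : X.ncard ≤ M.rk' X) : M.Indep X := by
  rw [indep_iff_eRk_eq_encard_of_finite (toFinite X), ← cast_rk', ← (toFinite X).cast_ncard_eq,
    Nat.cast_inj]
  exact (M.rk'_le_ncard X).antisymm hX

lemma IsCircuit.rk'_add_one (hC : M.IsCircuit C) : M.rk' C + 1 = C.ncard := by
  have := hC.eRk_add_one_eq
  rw [← cast_rk', ← (toFinite C).cast_ncard_eq] at this
  exact_mod_cast this

lemma ncard_add_rk'_le_of_subset (M : Matroid α) (hST : S ⊆ T) :
    S.ncard + M.rk' T ≤ T.ncard + M.rk' S := by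
  have h := M.eRk_le_eRk_add_eRk_sdiff hST
  simp only [← cast_rk'] at h
  norm_cast at h
  have := M.rk'_le_ncard (T \ S)
  have := ncard_sdiff_add_ncard_of_subset hST
  omega

lemma rk'_insert_eq_of_subset (hXY : X ⊆ Y) (h : M.rk' (insert x X) = M.rk' X) :
    M.rk' (insert x Y) = M.rk' Y := by
  have hsub := M.rk'_inter_add_rk'_union_le (insert x X) Y
  rw [insert_union, union_eq_self_of_subset_left hXY, h] at hsub
  have := M.rk'_mono (subset_inter (subset_insert x X) hXY)
  have := M.rk'_mono (subset_insert x Y)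
  omega

lemma rk'_contractElem_add_one (he : M.IsNonloop e) (X : Set α) :
    (M ／ {e}).rk' X + 1 = M.rk' (insert e X) := by
  obtain ⟨J, hJ, heJ⟩ :=
    he.indep.subset_isBasis'_of_subset (singleton_subset_iff.2 (mem_insert e X))
  have hX := eRk_insert_of_notMem_ground (M := M ／ {e}) X (e := e) (by simp)
  rw [← cast_rk', ← cast_rk', Nat.cast_inj] at hX
  rw [← hX, (hJ.contract_isBasis'_sdiff_of_subset heJ).rk'_eq, hJ.rk'_eq,
    ncard_sdiff_singleton_add_one (heJ rfl)]

end Rank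

section Circuit

lemma IsCircuit.eq_of_sdiff_singleton_eq (hC : M.IsCircuit C) (hD : M.IsCircuit D)
    (h : C \ {e} = D \ {e}) : C = D := by
  by_cases heD : e ∈ D
  · refine hC.eq_of_subset_isCircuit hD fun x hx ↦ ?_
    by_cases hxe : x = e
    · exact hxe ▸ heD
    · have : x ∈ D \ {e} := h ▸ ⟨hx, hxe⟩
      exact this.1
  · refine (hD.eq_of_subset_isCircuit hC fun x hx ↦ ?_).symm
    have : x ∈ C \ {e} := h ▸ ⟨hx, fun hxe ↦ heD (hxe ▸ hx)⟩
    exact this.1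

lemma IsCircuit.inter_indep (hC : M.IsCircuit C) (hD : M.IsCircuit D) (hCD : C ≠ D) :
    M.Indep (C ∩ D) :=
  hC.ssubset_indep <| inter_subset_left.ssubset_of_ne fun h ↦
    hCD (hC.eq_of_subset_isCircuit hD (h ▸ inter_subset_right))

variable [Finite α]

lemma IsCircuit.rk'_union_add_two_le (hC : M.IsCircuit C) (hD : M.IsCircuit D) (hCD : C ≠ D) :
    M.rk' (C ∪ D) + 2 ≤ (C ∪ D).ncard := by
  have := M.rk'_inter_add_rk'_union_le C D
  have := (hC.inter_indep hD hCD).rk'_eq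
  have := hC.rk'_add_one
  have := hD.rk'_add_one
  have := ncard_union_add_ncard_inter C D
  omega

lemma IsCircuit.modularPairSets_iff (hC : M.IsCircuit C) (hD : M.IsCircuit D) (hCD : C ≠ D) :
    M.ModularPairSets C D ↔ (C ∪ D).ncard ≤ M.rk' (C ∪ D) + 2 := by
  have := hC.rk'_union_add_two_le hD hCD
  have := (hC.inter_indep hD hCD).rk'_eq
  have := hC.rk'_add_one
  have := hD.rk'_add_one
  have := ncard_union_add_ncard_inter C D
  unfold ModularPairSets
  omega

lemma IsCircuit.eq_of_subset_of_ncard_le (hC : M.IsCircuit C) (hD : M.IsCircuit D)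
    (hCS : C ⊆ S) (hDS : D ⊆ S) (hS : S.ncard ≤ M.rk' S + 1) : C = D := by
  by_contra hCD
  have := hC.rk'_union_add_two_le hD hCD
  have := M.ncard_add_rk'_le_of_subset (union_subset hCS hDS)
  omega

lemma IsCircuit.rk'_insert_eq (hC : M.IsCircuit (insert e D)) (heD : e ∉ D) (hDX : D ⊆ X) :
    M.rk' (insert e X) = M.rk' X := by
  refine rk'_insert_eq_of_subset hDX ?_
  have := hC.rk'_add_one
  rw [(hC.ssubset_indep (ssubset_insert heD)).rk'_eq]
  rw [ncard_insert_of_notMem heD] at this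
  omega

lemma isNonloop_of_rk'_sdiff_singleton_lt (h : M.rk' (S \ {e}) < M.rk' S) : M.IsNonloop e := by
  by_contra he
  have he0 : M.rk' {e} = 0 := by
    have h1 : M.rk' {e} ≠ 1 := by
      rwa [Ne, ← Nat.cast_inj (R := ℕ∞), cast_rk', Nat.cast_one, eRk_singleton_eq_one_iff]
    have := M.rk'_le_ncard {e}
    rw [ncard_singleton] at this
    omega
  have := rk'_insert_eq_of_subset (x := e) (empty_subset (S \ {e}))
    (by rw [insert_empty_eq, he0, rk'_empty])
  have := M.rk'_mono (show S ⊆ insert e (S \ {e}) by simp)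
  omega

end Circuit

section ModularPair

lemma ModularPairSets.symm (h : M.ModularPairSets S T) : M.ModularPairSets T S := by
  unfold ModularPairSets at *
  rw [inter_comm, union_comm]
  omega

variable [Finite α]

lemma Indep.modularPairSets (h : M.Indep (S ∪ T)) : M.ModularPairSets S T := by
  unfold ModularPairSets
  rw [h.rk'_eq, (h.subset (inter_subset_left.trans subset_union_left)).rk'_eq,
    (h.subset subset_union_left).rk'_eq, (h.subset subset_union_right).rk'_eq,
    ncard_inter_add_ncard_union]

lemma ModularPairSets.indep_union (h : M.ModularPairSets S T) (hS : M.Indep S) (hT : M.Indep T)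
    (hST : Disjoint S T) : M.Indep (S ∪ T) := by
  refine indep_of_ncard_le_rk' ?_
  unfold ModularPairSets at h
  rw [hST.inter_eq, rk'_empty, hS.rk'_eq, hT.rk'_eq] at h
  rw [ncard_union_eq hST]
  omega

lemma ModularPairSets.sdiff_singleton_left (h : M.ModularPairSets S T) (hxS : x ∈ S)
    (hxT : x ∉ T) : M.ModularPairSets (S \ {x}) T := by
  have hinter : S \ {x} ∩ T = S ∩ T := by
    rw [sdiff_inter_right_comm, sdiff_singleton_eq_self (fun h ↦ hxT h.2)]
  have hunion : S \ {x} ∪ T = (S ∪ T) \ {x} := by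
    rw [union_sdiff_distrib, sdiff_singleton_eq_self hxT]
  have hS : insert x (S \ {x}) = S := by simp [hxS]
  have hST : insert x ((S ∪ T) \ {x}) = S ∪ T := by simp [hxS]
  unfold ModularPairSets at *
  rw [hinter, hunion]
  have := M.rk'_inter_add_rk'_union_le (S \ {x}) T
  rw [hinter, hunion] at this
  have := M.rk'_mono (show S \ {x} ⊆ S from sdiff_subset)
  have := M.rk'_mono (show (S ∪ T) \ {x} ⊆ S ∪ T from sdiff_subset)
  have := hST ▸ M.rk'_insert_le_add_one x ((S ∪ T) \ {x})
  have := hS ▸ M.rk'_insert_le_add_one x (S \ {x})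
  by_cases hrk : M.rk' S = M.rk' (S \ {x})
  · have := rk'_insert_eq_of_subset (hunion ▸ subset_union_left) (by rw [hS, hrk])
    rw [hST] at this
    omega
  · omega

lemma ModularPairSets.sdiff_singleton_of_rk'_eq (h : M.ModularPairSets S T) (hxS : x ∈ S)
    (hxT : x ∈ T) (hx : M.rk' ((S ∩ T) \ {x}) = M.rk' (S ∩ T)) :
    M.ModularPairSets (S \ {x}) (T \ {x}) := by
  have hrk : ∀ U, S ∩ T ⊆ U → M.rk' (U \ {x}) = M.rk' U := fun U hU ↦ by
    have hxU : x ∈ U := hU ⟨hxS, hxT⟩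
    have := rk'_insert_eq_of_subset (M := M) (x := x) (sdiff_subset_sdiff_left hU)
      (by rw [insert_sdiff_singleton, insert_eq_of_mem (show x ∈ S ∩ T from ⟨hxS, hxT⟩), hx])
    rwa [insert_sdiff_singleton, insert_eq_of_mem hxU, eq_comm] at this
  unfold ModularPairSets at *
  rw [← sdiff_inter_distrib_right, ← union_sdiff_distrib, hrk _ subset_rfl,
    hrk _ (inter_subset_left.trans subset_union_left), hrk _ inter_subset_left,
    hrk _ inter_subset_right, h]

/-- An element can be deleted from a modular pair, keeping it modular, unless it is a coloop of
the intersection. -/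
lemma ModularPairSets.exists_sdiff_singleton (h : M.ModularPairSets S T)
    (hx : x ∈ S → x ∈ T → M.rk' ((S ∩ T) \ {x}) = M.rk' (S ∩ T)) :
    ∃ S' ⊆ S, ∃ T' ⊆ T, S' ∪ T' = (S ∪ T) \ {x} ∧ M.ModularPairSets S' T' := by
  by_cases hxS : x ∈ S <;> by_cases hxT : x ∈ T
  · exact ⟨_, sdiff_subset, _, sdiff_subset, union_sdiff_distrib.symm,
      h.sdiff_singleton_of_rk'_eq hxS hxT (hx hxS hxT)⟩
  · exact ⟨_, sdiff_subset, T, subset_rfl, by rw [union_sdiff_distrib, sdiff_singleton_eq_self hxT],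
      h.sdiff_singleton_left hxS hxT⟩
  · exact ⟨S, subset_rfl, _, sdiff_subset, by rw [union_sdiff_distrib, sdiff_singleton_eq_self hxS],
      (h.symm.sdiff_singleton_left hxT hxS).symm⟩
  · exact ⟨S, subset_rfl, T, subset_rfl, (sdiff_singleton_eq_self (by simp [hxS, hxT])).symm, h⟩

lemma modularPairSets_contractElem_iff (he : M.IsNonloop e) :
    (M ／ {e}).ModularPairSets S T ↔ M.ModularPairSets (insert e S) (insert e T) := by
  unfold ModularPairSets
  rw [← insert_inter_distrib, ← insert_union_distrib, ← rk'_contractElem_add_one he,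
    ← rk'_contractElem_add_one he, ← rk'_contractElem_add_one he, ← rk'_contractElem_add_one he]
  omega

lemma IsCircuit.modularPairSets_of_sdiff_singleton_subset (hC : M.IsCircuit C) (hxC : x ∈ C)
    (hxS : x ∉ S) (hCS : C \ {x} ⊆ S) : M.ModularPairSets S C := by
  have hinter : S ∩ C = C \ {x} :=
    subset_antisymm (fun y hy ↦ ⟨hy.2, fun hyx ↦ hxS (hyx ▸ hy.1)⟩)
      (subset_inter hCS sdiff_subset)
  have hunion : S ∪ C = insert x S :=
    subset_antisymm (union_subset (subset_insert x S)
      ((subset_insert_sdiff_singleton x C).trans (insert_subset_insert hCS)))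
      (insert_subset (Or.inr hxC) subset_union_left)
  have hC' : M.IsCircuit (insert x (C \ {x})) := by
    rwa [insert_sdiff_singleton, insert_eq_of_mem hxC]
  have := hC.rk'_add_one
  have := ncard_sdiff_singleton_add_one hxC
  unfold ModularPairSets
  rw [hinter, hunion, hC'.rk'_insert_eq (by simp) hCS, (hC.sdiff_singleton_indep hxC).rk'_eq]
  omega

end ModularPair

section Contract

lemma IsCircuit.exists_isCircuit_of_contractElem (hC : (M ／ {e}).IsCircuit C) :
    ∃ C', M.IsCircuit C' ∧ C' \ {e} = C := by
  obtain ⟨C', hC', hCC', hC'C⟩ := hC.exists_subset_isCircuit_of_contract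
  have heC : e ∉ C := fun h ↦ (hC.subset_ground h).2 rfl
  exact ⟨C', hC', subset_antisymm (fun y hy ↦ (hC'C hy.1).resolve_right hy.2)
    (subset_sdiff_singleton hCC' heC)⟩

lemma IsCircuit.exists_insert_isCircuit_of_not_isCircuit_contractElem (hZ : M.IsCircuit Z)
    (heZ : e ∉ Z) (h : ¬ (M ／ {e}).IsCircuit Z) : ∃ D ⊆ Z, M.IsCircuit (insert e D) := by
  obtain ⟨D, hDZ, hD⟩ := (hZ.contract_dep (disjoint_singleton_left.2 heZ)).exists_isCircuit_subset
  obtain ⟨D', hD', rfl⟩ := hD.exists_isCircuit_of_contractElem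
  refine ⟨_, hDZ, ?_⟩
  by_cases heD' : e ∈ D'
  · rwa [insert_sdiff_singleton, insert_eq_of_mem heD']
  rw [sdiff_singleton_eq_self heD'] at hDZ hD
  exact (h (hD'.eq_of_subset_isCircuit hZ hDZ ▸ hD)).elim

def contractClass (M : Matroid α) (L : Set (Set α)) (e : α) : Set (Set α) :=
  {C | (M ／ {e}).IsCircuit C ∧ ∃ C' ∈ L, C' \ {e} = C}

lemma IsCircuit.mem_of_sdiff_singleton_mem_contractClass (hL : M.LinearClass L)
    (hZ : M.IsCircuit Z) (h : Z \ {e} ∈ M.contractClass L e) : Z ∈ L := by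
  obtain ⟨-, Z', hZ'L, hZ'Z⟩ := h
  rwa [← (hL.isCircuit hZ'L).eq_of_sdiff_singleton_eq hZ hZ'Z]

variable [Finite α]

lemma LinearClass.contractClass (hL : M.LinearClass L) (he : M.IsNonloop e) :
    (M ／ {e}).LinearClass (M.contractClass L e) := by
  refine linearClass_iff.2 ⟨fun C hC ↦ hC.1, ?_⟩
  rintro _ ⟨hX, X, hXL, rfl⟩ _ ⟨hY, Y, hYL, rfl⟩ hXY Z hZ hZXY
  obtain ⟨Z', hZ', rfl⟩ := hZ.exists_isCircuit_of_contractElem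
  refine ⟨hZ, Z', ?_, rfl⟩
  by_cases hXY' : X \ {e} = Y \ {e}
  · rw [← hXY', union_self] at hZXY
    rwa [hZ'.eq_of_sdiff_singleton_eq (hL.isCircuit hXL) (hZ.eq_of_subset_isCircuit hX hZXY)]
  have hXc := hL.isCircuit hXL
  have hYc := hL.isCircuit hYL
  have hXYne : X ≠ Y := fun h ↦ hXY' (h ▸ rfl)
  set V := X \ {e} ∪ Y \ {e} with hV
  have heV : e ∉ V := by simp [V]
  have hVnull : (insert e V).ncard ≤ M.rk' (insert e V) + 2 := by
    have := (hX.modularPairSets_iff hY hXY').1 hXY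
    rw [← hV] at this
    rw [ncard_insert_of_notMem heV, ← rk'_contractElem_add_one he]
    omega
  have hXYV : X ∪ Y ⊆ insert e V := by
    rw [hV, ← union_sdiff_distrib, insert_sdiff_singleton]
    exact subset_insert _ _
  have hmod : M.ModularPairSets X Y := by
    refine (hXc.modularPairSets_iff hYc hXYne).2 ?_
    have := M.ncard_add_rk'_le_of_subset hXYV
    have := hXc.rk'_union_add_two_le hYc hXYne
    omega
  refine hL.mem_of_subset_union hXL hYL hmod hZ' fun z hz ↦ ?_
  by_cases hze : z = e
  · rw [hze] at hz ⊢
    by_contra heXY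
    -- otherwise `e` would be spanned by `V = X ∪ Y`, raising the nullity of `insert e V` to 3
    have hZe : M.IsCircuit (insert e (Z' \ {e})) := by
      rwa [insert_sdiff_singleton, insert_eq_of_mem hz]
    have := hZe.rk'_insert_eq (by simp) hZXY
    have := M.ncard_add_rk'_le_of_subset
      (show X ∪ Y ⊆ V by rw [hV, ← union_sdiff_distrib, sdiff_singleton_eq_self heXY])
    have := hXc.rk'_union_add_two_le hYc hXYne
    rw [ncard_insert_of_notMem heV] at hVnull
    omega
  · exact union_subset_union sdiff_subset sdiff_subset (hZXY ⟨hz, hze⟩)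

end Contract

section CircuitIdeal

def circuitIdeal (M : Matroid α) (L : Set (Set α)) : Set (Set α) :=
  {S | ∀ C, M.IsCircuit C → C ⊆ S → C ∈ L}

lemma mem_circuitIdeal_of_subset (hT : T ∈ M.circuitIdeal L) (hST : S ⊆ T) :
    S ∈ M.circuitIdeal L :=
  fun C hC hCS ↦ hT C hC (hCS.trans hST)

lemma sdiff_singleton_mem_circuitIdeal_contractClass (hA : A ∈ M.circuitIdeal L) (heA : e ∈ A) :
    A \ {e} ∈ (M ／ {e}).circuitIdeal (M.contractClass L e) := by
  intro C hC hCA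
  obtain ⟨C', hC', rfl⟩ := hC.exists_isCircuit_of_contractElem
  refine ⟨hC, C', hA C' hC' fun y hy ↦ ?_, rfl⟩
  by_cases hye : y = e
  · exact hye ▸ heA
  · exact (hCA ⟨hy, hye⟩).1

variable [Finite α]

lemma ModularPairSets.not_isCircuit_union (hAB : M.ModularPairSets A B) (hdisj : Disjoint A B)
    (hA : ¬ A ∪ B ⊆ A) (hB : ¬ A ∪ B ⊆ B) : ¬ M.IsCircuit (A ∪ B) := fun hC ↦
  hC.not_indep <| hAB.indep_union
    (hC.ssubset_indep (subset_union_left.ssubset_of_ne fun h ↦ hA h.symm.subset))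
    (hC.ssubset_indep (subset_union_right.ssubset_of_ne fun h ↦ hB h.symm.subset)) hdisj

/-- If `e ∉ Z` is spanned by a proper part of the circuit `Z`, then `insert e Z` has nullity two,
and `Z` is covered by a modular pair of the other circuits it contains. -/
lemma LinearClass.mem_of_isCircuit_insert (hL : M.LinearClass L) (hZ : M.IsCircuit Z)
    (he : M.IsNonloop e) (heZ : e ∉ Z) (hDZ : D ⊆ Z) (hD : M.IsCircuit (insert e D))
    (h : ∀ F, M.IsCircuit F → F ⊆ insert e Z → F ≠ Z → F ∈ L) : Z ∈ L := by
  obtain ⟨w, hwD⟩ : D.Nonempty := by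
    rw [nonempty_iff_ne_empty]
    rintro rfl
    exact hD.not_indep (by simpa using he.indep)
  have heD : e ∉ D := fun h ↦ heZ (hDZ h)
  have hZD : Z ≠ insert e D := fun h ↦ heZ (h ▸ mem_insert e D)
  have hDL : insert e D ∈ L := h _ hD (insert_subset_insert hDZ) hZD.symm
  obtain ⟨F, hFsub, hF⟩ := hZ.elimination hD hZD w
  rw [union_insert, union_eq_self_of_subset_right hDZ] at hFsub
  have hwF : w ∉ F := fun h ↦ (hFsub h).2 rfl
  have hFZ : F ⊆ insert e Z := hFsub.trans sdiff_subset
  have hFL : F ∈ L := h F hF hFZ fun h ↦ hwF (h ▸ hDZ hwD)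
  have hDF : insert e D ≠ F := fun h ↦ hwF (h ▸ mem_insert_of_mem e hwD)
  have := hD.rk'_insert_eq heD hDZ
  have := hZ.rk'_add_one
  have := ncard_insert_of_notMem heZ (toFinite Z)
  refine hL.mem_of_subset_union hDL hFL ?_ hZ fun z hzZ ↦ ?_
  · refine (hD.modularPairSets_iff hF hDF).2 ?_
    have := M.ncard_add_rk'_le_of_subset (union_subset (insert_subset_insert hDZ) hFZ)
    omega
  by_contra hz
  -- `insert e Z \ {z}` has nullity one, so it cannot contain both `insert e D` and `F`
  refine hDF (hD.eq_of_subset_of_ncard_le hF (S := insert e Z \ {z})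
    (fun y hy ↦ ⟨insert_subset_insert hDZ hy, fun h ↦ hz (Or.inl (h ▸ hy))⟩)
    (fun y hy ↦ ⟨hFZ hy, fun h ↦ hz (Or.inr (h ▸ hy))⟩) ?_)
  have := (hZ.sdiff_singleton_indep hzZ).rk'_eq
  have := M.rk'_mono (sdiff_subset_sdiff_left (subset_insert e Z) (t := {z}))
  have := ncard_sdiff_singleton_add_one (mem_insert_of_mem e hzZ)
  have := ncard_sdiff_singleton_add_one hzZ
  omega

lemma LinearClass.union_mem_circuitIdeal_of_minors (hL : M.LinearClass L)
    (hA : A ∈ M.circuitIdeal L) (hB : B ∈ M.circuitIdeal L) (hAB : M.ModularPairSets A B)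
    (hdel : ∀ x ∈ A ∪ B, (x ∈ A → x ∈ B → M.rk' ((A ∩ B) \ {x}) = M.rk' (A ∩ B)) →
      (A ∪ B) \ {x} ∈ M.circuitIdeal L)
    (hcon : ∀ e ∈ A ∩ B, M.IsNonloop e →
      (A ∪ B) \ {e} ∈ (M ／ {e}).circuitIdeal (M.contractClass L e)) :
    A ∪ B ∈ M.circuitIdeal L := by
  intro Z hZ hZAB
  by_cases hZA : Z ⊆ A
  · exact hA Z hZ hZA
  by_cases hZB : Z ⊆ B
  · exact hB Z hZ hZB
  have hcon' : ∀ e ∈ A ∩ B, M.IsNonloop e → (M ／ {e}).IsCircuit (Z \ {e}) → Z ∈ L :=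
    fun e he hnl hZe ↦ hZ.mem_of_sdiff_singleton_mem_contractClass hL
      (hcon e he hnl _ hZe (sdiff_subset_sdiff_left hZAB))
  by_cases hdelZ : ∃ x ∈ A ∪ B,
      (x ∈ A → x ∈ B → M.rk' ((A ∩ B) \ {x}) = M.rk' (A ∩ B)) ∧ x ∉ Z
  · obtain ⟨x, hx, hxdel, hxZ⟩ := hdelZ
    exact hdel x hx hxdel Z hZ (subset_sdiff_singleton hZAB hxZ)
  push Not at hdelZ
  by_cases hABZ : ∃ e ∈ A ∩ B, e ∈ Z
  · obtain ⟨e, he, heZ⟩ := hABZ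
    have heZ' : {e} ⊂ Z := (singleton_subset_iff.2 heZ).ssubset_of_ne
      (by rintro rfl; exact hZA (singleton_subset_iff.2 he.1))
    exact hcon' e he (indep_singleton.1 (hZ.ssubset_indep heZ')) (hZ.contract_isCircuit heZ')
  push Not at hABZ
  obtain ⟨e, he⟩ : (A ∩ B).Nonempty := not_disjoint_iff_nonempty_inter.1 fun hdisj ↦ by
    have hABZ : A ∪ B = Z := hZAB.antisymm' fun x hx ↦
      hdelZ x hx fun hxA hxB ↦ (hdisj.ne_of_mem hxA hxB rfl).elim
    exact hAB.not_isCircuit_union hdisj (hABZ ▸ hZA) (hABZ ▸ hZB) (hABZ ▸ hZ)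
  have heZ := hABZ e he
  have hnl : M.IsNonloop e := isNonloop_of_rk'_sdiff_singleton_lt <|
    (M.rk'_mono sdiff_subset).lt_of_ne fun h ↦ heZ (hdelZ e (mem_union_left _ he.1) fun _ _ ↦ h)
  by_cases hZe : (M ／ {e}).IsCircuit Z
  · exact hcon' e he hnl (by rwa [sdiff_singleton_eq_self heZ])
  obtain ⟨D, hDZ, hD⟩ := hZ.exists_insert_isCircuit_of_not_isCircuit_contractElem heZ hZe
  refine hL.mem_of_isCircuit_insert hZ hnl heZ hDZ hD fun F hF hFZ hFne ↦ ?_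
  obtain ⟨z, hzZ, hzF⟩ := not_subset.1 fun h ↦ hFne (hZ.eq_of_subset_isCircuit hF h).symm
  exact hdel z (hZAB hzZ) (fun hzA hzB ↦ (hABZ z ⟨hzA, hzB⟩ hzZ).elim) F hF
    (subset_sdiff_singleton (hFZ.trans (insert_subset (mem_union_left _ he.1) hZAB)) hzF)

theorem LinearClass.union_mem_circuitIdeal (hL : M.LinearClass L) (hA : A ∈ M.circuitIdeal L)
    (hB : B ∈ M.circuitIdeal L) (hAB : M.ModularPairSets A B) : A ∪ B ∈ M.circuitIdeal L := by
  obtain ⟨n, hn⟩ : ∃ n, (A ∪ B).ncard = n := ⟨_, rfl⟩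
  induction n using Nat.strong_induction_on generalizing M L A B with
  | _ n ih =>
  refine hL.union_mem_circuitIdeal_of_minors hA hB hAB (fun x hx hxdel ↦ ?_) fun e he hnl ↦ ?_
  · obtain ⟨A', hA'A, B', hB'B, hAB', hmod⟩ := hAB.exists_sdiff_singleton hxdel
    rw [← hAB']
    exact ih _ (hn ▸ hAB' ▸ ncard_sdiff_singleton_lt_of_mem hx) hL
      (mem_circuitIdeal_of_subset hA hA'A) (mem_circuitIdeal_of_subset hB hB'B) hmod rfl
  · rw [union_sdiff_distrib]
    refine ih _ ?_ (hL.contractClass hnl) (sdiff_singleton_mem_circuitIdeal_contractClass hA he.1)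
      (sdiff_singleton_mem_circuitIdeal_contractClass hB he.2) ?_ rfl
    · rw [← union_sdiff_distrib, ← hn]
      exact ncard_sdiff_singleton_lt_of_mem (mem_union_left _ he.1)
    · rwa [modularPairSets_contractElem_iff hnl, insert_sdiff_singleton, insert_sdiff_singleton,
        insert_eq_of_mem he.1, insert_eq_of_mem he.2]

end CircuitIdeal

section ModularIdeal

variable {I I₁ I₂ : Set (Set α)}

lemma ModularIdeal.mem_of_subset (hI : M.ModularIdeal I) (hST : S ⊆ T) (hT : T ∈ I) : S ∈ I :=
  hI.2.1 S T hST hT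

lemma ModularIdeal.union_mem (hI : M.ModularIdeal I) (hS : S ∈ I) (hT : T ∈ I)
    (hST : M.ModularPairSets S T) : S ∪ T ∈ I :=
  hI.2.2.2 S T hS hT hST

lemma ModularIdeal.linearClass_inter (hI : M.ModularIdeal I) :
    M.LinearClass (I ∩ {C | M.IsCircuit' C}) :=
  ⟨fun _ hC ↦ hC.2, fun _ hX _ hY hXY _ hZ hZXY ↦
    ⟨hI.mem_of_subset hZXY (hI.union_mem hX.1 hY.1 hXY), hZ⟩⟩

lemma LinearClass.modularIdeal_circuitIdeal [Finite α] (hL : M.LinearClass L) :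
    M.ModularIdeal (M.circuitIdeal L) :=
  ⟨⟨∅, fun _ hC hC0 ↦ (hC.nonempty.ne_empty (subset_empty_iff.1 hC0)).elim⟩,
    fun _ _ hST hT ↦ mem_circuitIdeal_of_subset hT hST,
    fun _ he _ hC hCe ↦ (hC.not_indep (he.subset hCe)).elim,
    fun _ _ hS hT hST ↦ hL.union_mem_circuitIdeal hS hT hST⟩

lemma LinearClass.circuitIdeal_inter (hL : M.LinearClass L) :
    M.circuitIdeal L ∩ {C | M.IsCircuit' C} = L := by
  ext C
  simp only [mem_inter_iff, mem_ofPred_eq, isCircuit'_iff]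
  exact ⟨fun ⟨h, hC⟩ ↦ h C hC subset_rfl, fun hC ↦ ⟨fun D hD hDC ↦
    hD.eq_of_subset_isCircuit (hL.isCircuit hC) hDC ▸ hC, hL.isCircuit hC⟩⟩

variable [Finite α]

lemma ModularIdeal.indep_mem (hI : M.ModularIdeal I) (hS : M.Indep S) : S ∈ I := by
  induction S, toFinite S using Set.Finite.induction_on with
  | empty =>
    obtain ⟨T, hT⟩ := hI.1
    exact hI.mem_of_subset (empty_subset T) hT
  | @insert x S hxS _ ih =>
    rw [← singleton_union] at hS ⊢
    exact hI.union_mem (hI.2.2.1 x (hS.subset subset_union_left))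
      (ih (hS.subset subset_union_right)) hS.modularPairSets

lemma ModularIdeal.mem_of_forall_isCircuit_subset (hI : M.ModularIdeal I) (hSE : S ⊆ M.E)
    (h : ∀ C, M.IsCircuit C → C ⊆ S → C ∈ I) : S ∈ I := by
  obtain ⟨J, hJ⟩ := M.exists_isBasis S
  suffices ∀ D ⊆ S, J ∪ D ∈ I by
    simpa [union_eq_self_of_subset_left hJ.subset] using this S subset_rfl
  intro D hDS
  induction D, toFinite D using Set.Finite.induction_on with
  | empty => simpa using hI.indep_mem hJ.indep
  | @insert x D hxD _ ih =>
    have hJD := ih ((subset_insert x D).trans hDS)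
    by_cases hxJD : x ∈ J ∪ D
    · rwa [union_insert, insert_eq_of_mem hxJD]
    have hxJ : x ∉ J := fun h ↦ hxJD (Or.inl h)
    have hC := hJ.indep.fundCircuit_isCircuit (hJ.subset_closure (hDS (mem_insert x D))) hxJ
    have hCsub := M.fundCircuit_subset_insert x J
    have hmod := hC.modularPairSets_of_sdiff_singleton_subset (M.mem_fundCircuit x J) hxJD
      ((sdiff_subset_iff.2 (singleton_union ▸ hCsub)).trans subset_union_left)
    convert hI.union_mem hJD (h _ hC (hCsub.trans (insert_subset (hDS (mem_insert x D)) hJ.subset)))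
      hmod using 1
    rw [union_insert]
    exact subset_antisymm (insert_subset (Or.inr (M.mem_fundCircuit x J)) subset_union_left)
      (union_subset (subset_insert _ _) (hCsub.trans (insert_subset_insert subset_union_left)))

lemma ModularIdeal.subset_iff_inter_subset (h₁ : M.ModularIdeal I₁) (h₂ : M.ModularIdeal I₂)
    (hE : M.E = univ) :
    I₁ ⊆ I₂ ↔ I₁ ∩ {C | M.IsCircuit' C} ⊆ I₂ ∩ {C | M.IsCircuit' C} := by
  refine ⟨fun h ↦ inter_subset_inter_left _ h, fun h S hS ↦ ?_⟩
  refine h₂.mem_of_forall_isCircuit_subset (hE ▸ subset_univ S) fun C hC hCS ↦ ?_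
  exact (h ⟨h₁.mem_of_subset hCS hS, isCircuit'_iff.2 hC⟩).1

end ModularIdeal

end Matroid

/-- The map `I ↦ I ∩ 𝒞(M)` is a bijection from modular ideals of `M` onto linear classes of
circuits of `M`, and it is a lattice (order) isomorphism. -/
theorem modularIdeals_equiv_linearClasses
    {α : Type*} [Fintype α] (M : Matroid α) (hE : M.E = Set.univ) :
    Set.BijOn (fun I : Set (Set α) => I ∩ {C : Set α | M.IsCircuit' C})
      {I : Set (Set α) | M.ModularIdeal I} {L : Set (Set α) | M.LinearClass L} ∧
    ∀ I₁ I₂ : Set (Set α), M.ModularIdeal I₁ → M.ModularIdeal I₂ →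
      (I₁ ⊆ I₂ ↔
        I₁ ∩ {C : Set α | M.IsCircuit' C} ⊆ I₂ ∩ {C : Set α | M.IsCircuit' C}) := by
  have hsub : ∀ I₁ I₂ : Set (Set α), M.ModularIdeal I₁ → M.ModularIdeal I₂ → _ :=
    fun _ _ h₁ h₂ ↦ h₁.subset_iff_inter_subset h₂ hE
  refine ⟨⟨fun _ hI ↦ hI.linearClass_inter, fun I₁ h₁ I₂ h₂ h ↦ ?_,
    fun L hL ↦ ⟨M.circuitIdeal L, hL.modularIdeal_circuitIdeal, hL.circuitIdeal_inter⟩⟩, hsub⟩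
  exact ((hsub _ _ h₁ h₂).2 h.le).antisymm ((hsub _ _ h₂ h₁).2 h.ge)
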